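/- Let K be a field, q ∈ K, and let (A,·) and (B,∗) be q-generalized flexible algebras over K. Let l_A, r_A : A → End_K(B) and l_B, r_B : B → End_K(A) be K-linear maps such that (l_A, r_A, B) is a bimodule of A and (l_B, r_B, A) is a bimodule of B. Then the product on A ⊕ B defined by (x+a) ⋆ (y+b) := (x·y + l_B(a)y + r_B(b)x) + (a∗b + l_A(x)b + r_A(y)a) makes A ⊕ B a q-generalized flexible algebra if and only if for all x, y ∈ A and a, b ∈ B the following six relations hold: (M1) (l_B(a)x)·y + l_B(r_A(x)a)y − l_B(a)(x·y) = q·( r_B(a)(y·x) − y·(r_B(a)x) − r_B(l_A(x)a)y ); (M2) r_B(a)(x·y) − x·(r_B(a)y) − r_B(l_A(y)a)x = q·( (l_B(a)y)·x + l_B(r_A(y)a)x − l_B(a)(y·x) ); (M3) (r_B(a)x)·y + l_B(l_A(x)a)y − x·(l_B(a)y) − r_B(r_A(y)a)x = q·( (r_B(a)y)·x + l_B(l_A(y)a)x − y·(l_B(a)x) − r_B(r_A(x)a)y ); together with (M4)–(M6), which are the relations (M1)–(M3) with the roles of (A, ·, l_A, r_A) and (B, ∗, l_B, r_B) interchanged.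 -/
import Mathlib


/-- `(l, r, V)` is a bimodule of the `q`-generalized flexible algebra `(A, mul)`. -/
def IsBimodule {K A V : Type*} [Field K] [AddCommGroup A] [Module K A]
    [AddCommGroup V] [Module K V]
    (q : K) (mul : A →ₗ[K] A →ₗ[K] A) (l r : A →ₗ[K] Module.End K V) : Prop :=
  (∀ x y : A, l (mul x y) - l x * l y = q • (r x * r y - r (mul y x))) ∧
  (∀ x y : A, r x * l y - l y * r x = q • (r y * l x - l x * r y)) ∧
  (∀ x y : A, r x * r y - r (mul y x) = q • (l (mul x y) - l x * l y))

/-- The bicrossed product multiplication on `A × B`: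
`(x+a) ⋆ (y+b) := (x·y + l_B(a)y + r_B(b)x) + (a∗b + l_A(x)b + r_A(y)a)`. -/
def bicrossMul {K A B : Type*} [Field K] [AddCommGroup A] [Module K A]
    [AddCommGroup B] [Module K B]
    (mulA : A →ₗ[K] A →ₗ[K] A) (mulB : B →ₗ[K] B →ₗ[K] B)
    (lA rA : A →ₗ[K] Module.End K B) (lB rB : B →ₗ[K] Module.End K A) :
    A × B → A × B → A × B :=
  fun p₁ p₂ =>
    (mulA p₁.1 p₂.1 + lB p₁.2 p₂.1 + rB p₂.2 p₁.1,
     mulB p₁.2 p₂.2 + lA p₁.1 p₂.2 + rA p₂.1 p₁.2)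

set_option maxHeartbeats 4000000 in
/-- given two `q`-generalized flexible algebras `(A,·)` and `(B,∗)` and
bimodules `(l_A, r_A, B)` of `A` and `(l_B, r_B, A)` of `B`, the bicrossed product on
`A ⊕ B` is a `q`-generalized flexible algebra iff the six matched-pair relations
(M1)–(M6) hold. -/
theorem stmt11 {K A B : Type*} [Field K] [AddCommGroup A] [Module K A]
    [AddCommGroup B] [Module K B]
    (q : K) (mulA : A →ₗ[K] A →ₗ[K] A) (mulB : B →ₗ[K] B →ₗ[K] B)
    (hflexA : ∀ x y z : A,
      mulA (mulA x y) z - mulA x (mulA y z) = q • (mulA (mulA z y) x - mulA z (mulA y x)))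
    (hflexB : ∀ a b c : B,
      mulB (mulB a b) c - mulB a (mulB b c) = q • (mulB (mulB c b) a - mulB c (mulB b a)))
    (lA rA : A →ₗ[K] Module.End K B) (lB rB : B →ₗ[K] Module.End K A)
    (hbimA : IsBimodule q mulA lA rA) (hbimB : IsBimodule q mulB lB rB) :
    (∀ p₁ p₂ p₃ : A × B,
      bicrossMul mulA mulB lA rA lB rB (bicrossMul mulA mulB lA rA lB rB p₁ p₂) p₃
          - bicrossMul mulA mulB lA rA lB rB p₁ (bicrossMul mulA mulB lA rA lB rB p₂ p₃)
        = q • (bicrossMul mulA mulB lA rA lB rB (bicrossMul mulA mulB lA rA lB rB p₃ p₂) p₁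
          - bicrossMul mulA mulB lA rA lB rB p₃ (bicrossMul mulA mulB lA rA lB rB p₂ p₁)))
    ↔ ((∀ (x y : A) (a : B),
          mulA (lB a x) y + lB (rA x a) y - lB a (mulA x y)
            = q • (rB a (mulA y x) - mulA y (rB a x) - rB (lA x a) y)) ∧
       (∀ (x y : A) (a : B),
          rB a (mulA x y) - mulA x (rB a y) - rB (lA y a) x
            = q • (mulA (lB a y) x + lB (rA y a) x - lB a (mulA y x))) ∧
       (∀ (x y : A) (a : B),
          mulA (rB a x) y + lB (lA x a) y - mulA x (lB a y) - rB (rA y a) x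
            = q • (mulA (rB a y) x + lB (lA y a) x - mulA y (lB a x) - rB (rA x a) y)) ∧
       (∀ (a b : B) (x : A),
          mulB (lA x a) b + lA (rB a x) b - lA x (mulB a b)
            = q • (rA x (mulB b a) - mulB b (rA x a) - rA (lB a x) b)) ∧
       (∀ (a b : B) (x : A),
          rA x (mulB a b) - mulB a (rA x b) - rA (lB b x) a
            = q • (mulB (lA x b) a + lA (rB b x) a - lA x (mulB b a))) ∧
       (∀ (a b : B) (x : A),
          mulB (rA x a) b + lA (lB a x) b - mulB a (lA x b) - rA (rB b x) a
            = q • (mulB (rA x b) a + lA (lB b x) a - mulB b (lA x a) - rA (rB a x) b))) := by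

  constructor
  · intro h
    refine ⟨?_, ?_, ?_, ?_, ?_, ?_⟩
    · intro x y a
      have h1 := congrArg Prod.fst (h (0, a) (x, 0) (y, 0))
      simp only [bicrossMul, map_zero, LinearMap.zero_apply, zero_add, add_zero,
        LinearMap.map_zero, Prod.fst_sub, Prod.smul_fst] at h1
      linear_combination (norm := module) h1
    · intro x y a
      have h1 := congrArg Prod.fst (h (x, 0) (y, 0) (0, a))
      simp only [bicrossMul, map_zero, LinearMap.zero_apply, zero_add, add_zero,
        LinearMap.map_zero, Prod.fst_sub, Prod.smul_fst] at h1
      linear_combination (norm := module) h1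
    · intro x y a
      have h1 := congrArg Prod.fst (h (x, 0) (0, a) (y, 0))
      simp only [bicrossMul, map_zero, LinearMap.zero_apply, zero_add, add_zero,
        LinearMap.map_zero, Prod.fst_sub, Prod.smul_fst] at h1
      linear_combination (norm := module) h1
    · intro a b x
      have h1 := congrArg Prod.snd (h (x, 0) (0, a) (0, b))
      simp only [bicrossMul, map_zero, LinearMap.zero_apply, zero_add, add_zero,
        LinearMap.map_zero, Prod.snd_sub, Prod.smul_snd] at h1
      linear_combination (norm := module) h1
    · intro a b x
      have h1 := congrArg Prod.snd (h (0, a) (0, b) (x, 0))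
      simp only [bicrossMul, map_zero, LinearMap.zero_apply, zero_add, add_zero,
        LinearMap.map_zero, Prod.snd_sub, Prod.smul_snd] at h1
      linear_combination (norm := module) h1
    · intro a b x
      have h1 := congrArg Prod.snd (h (0, a) (x, 0) (0, b))
      simp only [bicrossMul, map_zero, LinearMap.zero_apply, zero_add, add_zero,
        LinearMap.map_zero, Prod.snd_sub, Prod.smul_snd] at h1
      linear_combination (norm := module) h1
  · rintro ⟨hM1, hM2, hM3, hM4, hM5, hM6⟩
    obtain ⟨hB1, hB2, hB3⟩ := hbimB
    obtain ⟨hA1, hA2, hA3⟩ := hbimA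
    have pB1 : ∀ (a b : B) (z : A), lB (mulB a b) z - lB a (lB b z)
        = q • (rB a (rB b z) - rB (mulB b a) z) := by
      intro a b z
      have := LinearMap.congr_fun (hB1 a b) z
      simpa [Module.End.mul_apply, LinearMap.sub_apply, LinearMap.smul_apply] using this
    have pB2 : ∀ (c a : B) (y : A), rB c (lB a y) - lB a (rB c y)
        = q • (rB a (lB c y) - lB c (rB a y)) := by
      intro c a y
      have := LinearMap.congr_fun (hB2 c a) y
      simpa [Module.End.mul_apply, LinearMap.sub_apply, LinearMap.smul_apply] using this
    have pB3 : ∀ (c b : B) (x : A), rB c (rB b x) - rB (mulB b c) x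
        = q • (lB (mulB c b) x - lB c (lB b x)) := by
      intro c b x
      have := LinearMap.congr_fun (hB3 c b) x
      simpa [Module.End.mul_apply, LinearMap.sub_apply, LinearMap.smul_apply] using this
    have pA1 : ∀ (x y : A) (c : B), lA (mulA x y) c - lA x (lA y c)
        = q • (rA x (rA y c) - rA (mulA y x) c) := by
      intro x y c
      have := LinearMap.congr_fun (hA1 x y) c
      simpa [Module.End.mul_apply, LinearMap.sub_apply, LinearMap.smul_apply] using this
    have pA2 : ∀ (z x : A) (b : B), rA z (lA x b) - lA x (rA z b)
        = q • (rA x (lA z b) - lA z (rA x b)) := by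
      intro z x b
      have := LinearMap.congr_fun (hA2 z x) b
      simpa [Module.End.mul_apply, LinearMap.sub_apply, LinearMap.smul_apply] using this
    have pA3 : ∀ (z y : A) (a : B), rA z (rA y a) - rA (mulA y z) a
        = q • (lA (mulA z y) a - lA z (lA y a)) := by
      intro z y a
      have := LinearMap.congr_fun (hA3 z y) a
      simpa [Module.End.mul_apply, LinearMap.sub_apply, LinearMap.smul_apply] using this
    rintro ⟨x, a⟩ ⟨y, b⟩ ⟨z, c⟩
    refine Prod.ext ?_ ?_
    · simp only [bicrossMul, map_add, LinearMap.add_apply, Prod.fst_sub, Prod.smul_fst]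
      linear_combination (norm := module) hflexA x y z + hM1 y z a + hM3 x z b + hM2 x y c
        + pB1 a b z + pB2 c a y + pB3 c b x
    · simp only [bicrossMul, map_add, LinearMap.add_apply, Prod.snd_sub, Prod.smul_snd]
      linear_combination (norm := module) hflexB a b c + hM4 b c x + hM6 a c y + hM5 a b z
        + pA1 x y c + pA2 z x b + pA3 z y a
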